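/- For each i ∈ {0,…,4}, the set P(i) = {(x,y) ∈ ℤ×ℤ : x + 3y ≡ i (mod 5)} is a perfect distance-1 dominating set of the infinite grid ℤ×ℤ (every vertex is within ℓ1-distance 1 of exactly one element of P(i)), and P(i) is a (3,3) broadcast dominating set of ℤ×ℤ: for every (a,b) ∈ ℤ×ℤ, the sum of (3 − d((a,b),(x,y))) over all (x,y) ∈ P(i) with d((a,b),(x,y)) < 3 is at least 3, where d denotes ℓ1-distance. -/

import Mathlib

/-!
The map `label (x, y) = x + 3y` is a homomorphism `ℤ × ℤ → ZMod 5` sending the five points of the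
unit ℓ1-ball `0, ±e₁, ±e₂` to the five distinct residues `0, ±1, ±3`. Hence every translate of that
ball meets each class `P(i)` exactly once. Both properties are invariant under translation, which
shifts the class index by the label of the translation vector, so it suffices to verify them at
the origin for all five classes, a finite computation.
-/

open Finset

def l1Norm (q : ℤ × ℤ) : ℤ := |q.1| + |q.2|

@[simp] lemma l1Norm_neg (q : ℤ × ℤ) : l1Norm (-q) = l1Norm q := by
  simp [l1Norm]

lemma l1Norm_sub_comm (p q : ℤ × ℤ) : l1Norm (p - q) = l1Norm (q - p) := by
  rw [← neg_sub, l1Norm_neg]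

lemma mem_box_of_l1Norm_le {q : ℤ × ℤ} {r : ℤ} (h : l1Norm q ≤ r) :
    q ∈ Icc (-r) r ×ˢ Icc (-r) r := by
  have h₁ := abs_nonneg q.1
  have h₂ := abs_nonneg q.2
  simp only [mem_product, mem_Icc, ← abs_le]
  constructor <;> unfold l1Norm at h <;> linarith

/-- The box of radius `t` around `u` contains every point at ℓ1-distance `< t` from `u`, so this is
the whole broadcast reception of `{p | P p}` at `u`. -/
noncomputable def reception (P : ℤ × ℤ → Prop) [DecidablePred P] (t : ℤ) (u : ℤ × ℤ) : ℤ :=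
  ∑ p ∈ (Icc (u.1 - t) (u.1 + t) ×ˢ Icc (u.2 - t) (u.2 + t)).filter
      (fun p => l1Norm (u - p) < t ∧ P p), (t - l1Norm (u - p))

lemma reception_congr {P Q : ℤ × ℤ → Prop} [DecidablePred P] [DecidablePred Q]
    (h : ∀ p, P p ↔ Q p) (t : ℤ) (u : ℤ × ℤ) : reception P t u = reception Q t u := by
  unfold reception
  rw [filter_congr fun p _ => and_congr_right_iff.mpr fun _ => h p]

lemma reception_eq_reception_zero (P : ℤ × ℤ → Prop) [DecidablePred P] (t : ℤ) (u : ℤ × ℤ) :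
    reception P t u = reception (fun q => P (u + q)) t 0 := by
  refine sum_nbij' (fun p => p - u) (u + ·) ?_ ?_ ?_ ?_ ?_ <;>
    simp +contextual [mem_filter, mem_product, l1Norm_sub_comm u] <;> omega

lemma existsUnique_l1Norm_sub_le_iff (P : ℤ × ℤ → Prop) (r : ℤ) (u : ℤ × ℤ) :
    (∃! p, P p ∧ l1Norm (u - p) ≤ r) ↔ ∃! q, P (u + q) ∧ l1Norm q ≤ r :=
  ((Equiv.addLeft u).existsUnique_congr fun q => by simp).symm

def label (p : ℤ × ℤ) : ZMod 5 := ((p.1 + 3 * p.2 : ℤ) : ZMod 5)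

lemma label_add (p q : ℤ × ℤ) : label (p + q) = label p + label q := by
  simp only [label, Prod.fst_add, Prod.snd_add]
  push_cast
  ring

lemma existsUnique_label_eq_l1Norm_le_one (j : ZMod 5) :
    ∃! q, label q = j ∧ l1Norm q ≤ 1 := by
  have hcard : #((Icc (-1) 1 ×ˢ Icc (-1) 1).filter fun q => label q = j ∧ l1Norm q ≤ 1) = 1 := by
    revert j; decide
  rw [card_eq_one_iff_existsUnique] at hcard
  refine existsUnique_congr (fun q => ?_) |>.mp hcard
  rw [mem_filter, and_iff_right_iff_imp]
  exact fun h => mem_box_of_l1Norm_le h.2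

lemma three_le_reception_label_zero (j : ZMod 5) : 3 ≤ reception (label · = j) 3 0 := by
  revert j; decide

theorem stmt17 (i : ZMod 5) :
    (∀ a b : ℤ, ∃! p : ℤ × ℤ,
        ((p.1 + 3 * p.2 : ℤ) : ZMod 5) = i ∧ |a - p.1| + |b - p.2| ≤ 1) ∧
      ∀ a b : ℤ, (3 : ℤ) ≤
        ∑ p ∈ (Finset.Icc (a - 3) (a + 3) ×ˢ Finset.Icc (b - 3) (b + 3)).filter
            (fun p : ℤ × ℤ => |a - p.1| + |b - p.2| < 3 ∧ ((p.1 + 3 * p.2 : ℤ) : ZMod 5) = i),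
          (3 - (|a - p.1| + |b - p.2|)) := by
  have translate (u q : ℤ × ℤ) : label (u + q) = i ↔ label q = i - label u := by
    rw [label_add, eq_sub_iff_add_eq']
  refine ⟨fun a b => ?_, fun a b => ?_⟩
  · refine (existsUnique_l1Norm_sub_le_iff (label · = i) 1 (a, b)).mpr ?_
    simpa only [translate] using existsUnique_label_eq_l1Norm_le_one (i - label (a, b))
  · calc (3 : ℤ) ≤ reception (label · = i - label (a, b)) 3 0 := three_le_reception_label_zero _
      _ = reception (label · = i) 3 (a, b) := by
        rw [reception_eq_reception_zero (label · = i)]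
        exact reception_congr (fun q => (translate _ q).symm) 3 0
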